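/- arXiv:1901.05752 — 3 statements merged into one kernel-verified Lean document; each statement's English description precedes it below -/
import Mathlib

section
/- Let the problem have Property (P). Then the problem is strongly polynomially tractable if and only if A_* := liminf_{d→∞} ln(h_d^{-1})/ln d > 0. -/
/-!
`A_* > 0` says exactly that `h_k ≤ (k+1)^{-a}` eventually, for some `a > 0`. Under this decay,
Chebyshev's inequality with an exponent `τ' ≥ τ` bounds `n(ε,d)` by
`ε^{-2τ'} ∏_k (1 + H(1,τ) h_k^{τ'}) ≤ ε^{-2τ'} exp (H(1,τ) ∑_k h_k^{τ'})`, and the series converges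
once `a τ' > 1`. Conversely, when `ε² < h_d` the `d` indices with a single entry `2` are all
counted, so `d ≤ n(ε,d) ≤ C ε^{-p}`; taking `ε² ≈ d^{-δ}` with `δ p < 1` shows that `h_d > d^{-δ}`
is possible only for boundedly many `d`.
-/

open Filter Real Set

/-- Information complexity: the number of multi-indices `(j₁,…,j_d) ∈ ℕ^d`
(here 0-indexed, so `Λ k j` stands for `λ(k+1, j+1)`) whose eigenvalue product exceeds `ε²`. -/
noncomputable def infoCount (Λ : ℕ → ℕ → ℝ) (d : ℕ) (ε : ℝ) : ℕ :=
  Nat.card {j : Fin d → ℕ | ε ^ 2 < ∏ k : Fin d, Λ k.val (j k)}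

/-- Strong polynomial tractability. -/
def IsSPT (Λ : ℕ → ℕ → ℝ) : Prop :=
  ∃ C p : ℝ, 0 ≤ C ∧ 0 ≤ p ∧ ∀ d : ℕ, 1 ≤ d → ∀ ε : ℝ, ε ∈ Set.Ioo (0 : ℝ) 1 →
    (infoCount Λ d ε : ℝ) ≤ C * ε ^ (-p)

/-- The exponent `p*` of strong polynomial tractability. -/
noncomputable def sptExponent (Λ : ℕ → ℕ → ℝ) : ℝ :=
  sInf {p : ℝ | 0 ≤ p ∧ ∃ C : ℝ, 0 ≤ C ∧ ∀ d : ℕ, 1 ≤ d → ∀ ε : ℝ, ε ∈ Set.Ioo (0 : ℝ) 1 →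
    (infoCount Λ d ε : ℝ) ≤ C * ε ^ (-p)}

/-- Polynomial tractability. -/
def IsPT (Λ : ℕ → ℕ → ℝ) : Prop :=
  ∃ C p q : ℝ, 0 ≤ C ∧ 0 ≤ p ∧ 0 ≤ q ∧ ∀ d : ℕ, 1 ≤ d → ∀ ε : ℝ, ε ∈ Set.Ioo (0 : ℝ) 1 →
    (infoCount Λ d ε : ℝ) ≤ C * (d : ℝ) ^ q * ε ^ (-p)

/-- Quasi-polynomial tractability. -/
def IsQPT (Λ : ℕ → ℕ → ℝ) : Prop :=
  ∃ C t : ℝ, 0 < C ∧ 0 < t ∧ ∀ d : ℕ, 1 ≤ d → ∀ ε : ℝ, ε ∈ Set.Ioo (0 : ℝ) 1 →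
    (infoCount Λ d ε : ℝ) ≤ C * Real.exp (t * (1 + Real.log d) * (1 + Real.log ε⁻¹))

/-- The exponent `t*` of quasi-polynomial tractability. -/
noncomputable def qptExponent (Λ : ℕ → ℕ → ℝ) : ℝ :=
  sInf {t : ℝ | 0 < t ∧ ∃ C : ℝ, 0 < C ∧ ∀ d : ℕ, 1 ≤ d → ∀ ε : ℝ, ε ∈ Set.Ioo (0 : ℝ) 1 →
    (infoCount Λ d ε : ℝ) ≤ C * Real.exp (t * (1 + Real.log d) * (1 + Real.log ε⁻¹))}

/-- The filter describing `ε⁻¹ + d → ∞` over pairs `(ε, d)` with `ε ∈ (0,1)` and `d ≥ 1`. -/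
noncomputable def wtFilter : Filter (ℝ × ℕ) :=
  (Filter.comap (fun p : ℝ × ℕ => p.1⁻¹ + (p.2 : ℝ)) Filter.atTop) ⊓
    Filter.principal {p : ℝ × ℕ | p.1 ∈ Set.Ioo (0 : ℝ) 1 ∧ 1 ≤ p.2}

/-- `(s,t)`-weak tractability: `ln n(ε,d) / (ε^{-s} + d^t) → 0` as `ε⁻¹ + d → ∞`. -/
def IsWT (Λ : ℕ → ℕ → ℝ) (s t : ℝ) : Prop :=
  Filter.Tendsto
    (fun p : ℝ × ℕ => Real.log (infoCount Λ p.2 p.1) / (p.1 ^ (-s) + (p.2 : ℝ) ^ t))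
    wtFilter (nhds 0)

/-- Uniform weak tractability. -/
def IsUWT (Λ : ℕ → ℕ → ℝ) : Prop := ∀ s t : ℝ, 0 < s → 0 < t → IsWT Λ s t

/-- The problem suffers from the curse of dimensionality. -/
def SuffersCurse (Λ : ℕ → ℕ → ℝ) : Prop :=
  ∃ C ε₀ α : ℝ, 0 < C ∧ 0 < ε₀ ∧ 0 < α ∧ ∀ ε : ℝ, 0 < ε → ε ≤ ε₀ →
    {d : ℕ | C * (1 + α) ^ d ≤ (infoCount Λ d ε : ℝ)}.Infinite

/-- Condition (3) of Property (P) for a given `τ > 0`: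
`H(k,τ) = ∑_{j≥2} (λ(k,j)/λ(k,2))^τ` is finite for each `k` and
`sup_k H(k,τ) = H(1,τ)` (equivalently `H(k,τ) ≤ H(1,τ)` for all `k`). -/
def Cond3 (Λ : ℕ → ℕ → ℝ) (τ : ℝ) : Prop :=
  0 < τ ∧ (∀ k, Summable fun j : ℕ => (Λ k (j + 1) / Λ k 1) ^ τ) ∧
    ∀ k, (∑' j : ℕ, (Λ k (j + 1) / Λ k 1) ^ τ) ≤ ∑' j : ℕ, (Λ 0 (j + 1) / Λ 0 1) ^ τ

/-- `τ₀`: the infimum of all `τ` satisfying Condition (3). -/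
noncomputable def tau0 (Λ : ℕ → ℕ → ℝ) : ℝ := sInf {τ : ℝ | Cond3 Λ τ}

/-- Property (P): each sequence `λ(k,·)` is nonincreasing and nonnegative with `λ(k,1) = 1`
and `λ(k,2) > 0`, `h_k = λ(k,2)` is nonincreasing, and Condition (3) holds for some `τ > 0`. -/
structure PropertyP (Λ : ℕ → ℕ → ℝ) : Prop where
  nonneg : ∀ k j, 0 ≤ Λ k j
  anti : ∀ k, Antitone (Λ k)
  first : ∀ k, Λ k 0 = 1
  second_pos : ∀ k, 0 < Λ k 1
  h_anti : Antitone fun k => Λ k 1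
  cond3 : ∃ τ : ℝ, Cond3 Λ τ

open Finset

theorem le_rpow_neg_iff_le_log_inv_div_log {x y a : ℝ} (hx : 1 < x) (hy : 0 < y) :
    y ≤ x ^ (-a) ↔ a ≤ log y⁻¹ / log x := by
  rw [le_rpow_iff_log_le hy (by linarith), le_div_iff₀ (log_pos hx), log_inv]
  constructor <;> intro h <;> linarith

theorem liminf_log_inv_div_log_pos_iff {h : ℕ → ℝ} (hh : ∀ k, 0 < h k) :
    0 < liminf (fun k : ℕ => (log (h k)⁻¹ / log ((k : ℝ) + 1) : EReal)) atTop ↔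
      ∃ a : ℝ, 0 < a ∧ ∀ᶠ k : ℕ in atTop, h k ≤ ((k : ℝ) + 1) ^ (-a) := by
  have hbase : ∀ᶠ k : ℕ in atTop, 1 < (k : ℝ) + 1 := by
    filter_upwards [eventually_gt_atTop 0] with k hk
    exact lt_add_of_pos_left 1 (Nat.cast_pos.2 hk)
  constructor
  · intro hpos
    obtain ⟨a, ha, hlt⟩ := EReal.lt_iff_exists_real_btwn.1 hpos
    refine ⟨a, by exact_mod_cast ha, ?_⟩
    filter_upwards [eventually_lt_of_lt_liminf hlt, hbase] with k hk hk1
    exact (le_rpow_neg_iff_le_log_inv_div_log hk1 (hh k)).2 (EReal.coe_lt_coe_iff.1 hk).le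
  · rintro ⟨a, ha, hdecay⟩
    refine lt_of_lt_of_le (EReal.coe_lt_coe_iff.2 ha) (le_liminf_of_le (by isBoundedDefault) ?_)
    filter_upwards [hdecay, hbase] with k hk hk1
    exact EReal.coe_le_coe_iff.2 ((le_rpow_neg_iff_le_log_inv_div_log hk1 (hh k)).1 hk)

theorem summable_rpow_of_eventually_le_rpow_neg {h : ℕ → ℝ} (h0 : ∀ k, 0 ≤ h k) {a τ : ℝ}
    (hτ : 0 ≤ τ) (haτ : 1 < a * τ) (hdecay : ∀ᶠ k : ℕ in atTop, h k ≤ ((k : ℝ) + 1) ^ (-a)) :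
    Summable fun k => h k ^ τ := by
  have hp : Summable fun k : ℕ => ((k : ℝ) + 1) ^ (-(a * τ)) := by
    have := (summable_nat_add_iff 1).2 (Real.summable_nat_rpow.2 (by linarith : -(a * τ) < -1))
    simpa only [Nat.cast_add, Nat.cast_one] using this
  refine hp.of_norm_bounded_eventually_nat ?_
  filter_upwards [hdecay] with k hk
  rw [Real.norm_of_nonneg (rpow_nonneg (h0 k) τ), neg_mul_eq_neg_mul, rpow_mul (by positivity)]
  exact rpow_le_rpow (h0 k) hk hτ

theorem le_sq_of_le_mul_rpow {x M q : ℝ} (hx : 1 ≤ x) (hq : q ≤ 1 / 2) (h : x ≤ M * x ^ q) :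
    x ≤ M ^ 2 := by
  have hx0 : 0 < x := by linarith
  have hxq : x ^ q ≤ √x := by
    rw [sqrt_eq_rpow]
    exact rpow_le_rpow_of_exponent_le hx hq
  have hM : 0 < M := pos_of_mul_pos_left (hx0.trans_le h) (rpow_nonneg hx0.le q)
  have hsqrt : √x ≤ M := by
    refine le_of_mul_le_mul_right ?_ (sqrt_pos.2 hx0)
    rw [mul_self_sqrt hx0.le]
    exact h.trans (by gcongr)
  calc x = √x ^ 2 := (sq_sqrt hx0.le).symm
    _ ≤ M ^ 2 := by gcongr

theorem prod_one_add_le_exp_tsum {x : ℕ → ℝ} (hx0 : ∀ k, 0 ≤ x k) (hx : Summable x) (d : ℕ) :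
    ∏ k : Fin d, (1 + x k) ≤ exp (∑' k, x k) := by
  refine (prod_one_add_le_exp_sum univ fun k : Fin d => hx0 k).trans (exp_le_exp.2 ?_)
  rw [Fin.sum_univ_eq_sum_range x]
  exact hx.sum_le_tsum _ fun k _ => hx0 k

def infoSet (Λ : ℕ → ℕ → ℝ) (d : ℕ) (ε : ℝ) : Set (Fin d → ℕ) :=
  {j | ε ^ 2 < ∏ k : Fin d, Λ k.val (j k)}

theorem infoCount_eq_card_infoSet (Λ : ℕ → ℕ → ℝ) (d : ℕ) (ε : ℝ) :
    infoCount Λ d ε = Nat.card (infoSet Λ d ε) := rfl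

/-- `H(k+1, τ)` in the notation of the paper. -/
noncomputable def ratioSum (Λ : ℕ → ℕ → ℝ) (k : ℕ) (τ : ℝ) : ℝ :=
  ∑' j : ℕ, (Λ k (j + 1) / Λ k 1) ^ τ

namespace PropertyP

variable {Λ : ℕ → ℕ → ℝ}

theorem le_one (hP : PropertyP Λ) (k j : ℕ) : Λ k j ≤ 1 :=
  hP.first k ▸ hP.anti k (Nat.zero_le j)

theorem exists_bound (hP : PropertyP Λ) {τ : ℝ} (hτ : Cond3 Λ τ) (k : ℕ) {c : ℝ} (hc : 0 < c) :
    ∃ N : ℕ, ∀ n, c < Λ k n → n < N := by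
  have hk1 := hP.second_pos k
  obtain ⟨N, hN⟩ := ((hτ.2.1 k).tendsto_atTop_zero.eventually_lt_const
    (rpow_pos_of_pos (div_pos hc hk1) τ)).exists
  refine ⟨N + 1, fun n hn => lt_of_not_ge fun hNn => hN.not_ge ?_⟩
  exact rpow_le_rpow (div_pos hc hk1).le
    (div_le_div_of_nonneg_right (hn.trans_le (hP.anti k hNn)).le hk1.le) hτ.1.le

theorem infoSet_subset_box (hP : PropertyP Λ) {τ : ℝ} (hτ : Cond3 Λ τ) (d : ℕ) {ε : ℝ}
    (hε : 0 < ε) : ∃ N : ℕ → ℕ,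
      infoSet Λ d ε ⊆ ↑(Fintype.piFinset fun k : Fin d => range (N k)) := by
  choose N hN using fun k => hP.exists_bound hτ k (pow_pos hε 2)
  refine ⟨N, fun j hj => mem_coe.2 (Fintype.mem_piFinset.2 fun k =>
    mem_range.2 (hN _ _ (hj.trans_le ?_)))⟩
  calc ∏ m : Fin d, Λ m.val (j m)
      = Λ k.val (j k) * ∏ m ∈ univ.erase k, Λ m.val (j m) := (mul_prod_erase _ _ (mem_univ k)).symm
    _ ≤ Λ k.val (j k) * 1 := by
        gcongr
        · exact hP.nonneg _ _
        · exact prod_le_one (fun m _ => hP.nonneg _ _) fun m _ => hP.le_one _ _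
    _ = Λ k.val (j k) := mul_one _

theorem infoSet_finite (hP : PropertyP Λ) (d : ℕ) {ε : ℝ} (hε : 0 < ε) :
    (infoSet Λ d ε).Finite := by
  obtain ⟨τ, hτ⟩ := hP.cond3
  obtain ⟨N, hN⟩ := hP.infoSet_subset_box hτ d hε
  exact (Finset.finite_toSet _).subset hN

theorem sum_range_rpow_le (hP : PropertyP Λ) {τ τ' : ℝ} (hτ : Cond3 Λ τ) (hττ' : τ ≤ τ')
    (k M : ℕ) : ∑ n ∈ range M, Λ k n ^ τ' ≤ 1 + ratioSum Λ 0 τ * Λ k 1 ^ τ' := by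
  have hk1 := hP.second_pos k
  have hratio : ∀ i, Λ k (i + 1) ^ τ' = Λ k 1 ^ τ' * (Λ k (i + 1) / Λ k 1) ^ τ' := fun i => by
    rw [div_rpow (hP.nonneg _ _) hk1.le, mul_div_cancel₀ _ (rpow_pos_of_pos hk1 _).ne']
  have hratio_le : ∀ i, (Λ k (i + 1) / Λ k 1) ^ τ' ≤ (Λ k (i + 1) / Λ k 1) ^ τ := fun i =>
    rpow_le_rpow_of_exponent_ge' (div_nonneg (hP.nonneg _ _) hk1.le)
      (div_le_one_of_le₀ (hP.anti k (by omega)) hk1.le) hτ.1.le hττ'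
  have htail : ∑ i ∈ range M, (Λ k (i + 1) / Λ k 1) ^ τ' ≤ ratioSum Λ 0 τ :=
    calc ∑ i ∈ range M, (Λ k (i + 1) / Λ k 1) ^ τ'
        ≤ ∑ i ∈ range M, (Λ k (i + 1) / Λ k 1) ^ τ := sum_le_sum fun i _ => hratio_le i
      _ ≤ ratioSum Λ k τ := (hτ.2.1 k).sum_le_tsum _ fun i _ =>
          rpow_nonneg (div_nonneg (hP.nonneg _ _) hk1.le) _
      _ ≤ ratioSum Λ 0 τ := hτ.2.2 k
  calc ∑ n ∈ range M, Λ k n ^ τ'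
      ≤ ∑ n ∈ range (M + 1), Λ k n ^ τ' :=
        sum_le_sum_of_subset_of_nonneg (range_subset_range.2 M.le_succ)
          fun n _ _ => rpow_nonneg (hP.nonneg _ _) _
    _ = 1 + Λ k 1 ^ τ' * ∑ i ∈ range M, (Λ k (i + 1) / Λ k 1) ^ τ' := by
        rw [sum_range_succ', hP.first k, one_rpow, add_comm, mul_sum]
        exact congrArg _ (sum_congr rfl fun i _ => hratio i)
    _ ≤ 1 + ratioSum Λ 0 τ * Λ k 1 ^ τ' := by
        rw [mul_comm]
        gcongr

theorem infoCount_le (hP : PropertyP Λ) {τ τ' : ℝ} (hτ : Cond3 Λ τ) (hττ' : τ ≤ τ') (d : ℕ)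
    {ε : ℝ} (hε : 0 < ε) :
    (infoCount Λ d ε : ℝ) ≤ ε ^ (-(2 * τ')) * ∏ k : Fin d, (1 + ratioSum Λ 0 τ * Λ k 1 ^ τ') := by
  have hτ' : 0 ≤ τ' := hτ.1.le.trans hττ'
  obtain ⟨N, hbox⟩ := hP.infoSet_subset_box hτ d hε
  set P := Fintype.piFinset fun k : Fin d => range (N k)
  have hfin := hP.infoSet_finite d hε
  have hcount : infoCount Λ d ε = hfin.toFinset.card := by
    rw [infoCount_eq_card_infoSet, Nat.card_coe_set_eq, Set.ncard_eq_toFinset_card _ hfin]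
  have hpow : ∀ j ∈ hfin.toFinset, ε ^ (2 * τ') ≤ ∏ k : Fin d, Λ k.val (j k) ^ τ' := by
    intro j hj
    rw [Real.finsetProd_rpow _ _ (fun k _ => hP.nonneg _ _), rpow_mul hε.le, rpow_two]
    exact rpow_le_rpow (by positivity) (hfin.mem_toFinset.1 hj).le hτ'
  have hmarkov : (hfin.toFinset.card : ℝ) * ε ^ (2 * τ') ≤
      ∑ j ∈ P, ∏ k : Fin d, Λ k.val (j k) ^ τ' := by
    rw [← nsmul_eq_mul]
    refine (card_nsmul_le_sum _ _ _ hpow).trans (sum_le_sum_of_subset_of_nonneg ?_ ?_)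
    · exact fun j hj => hbox (hfin.mem_toFinset.1 hj)
    · exact fun j _ _ => prod_nonneg fun k _ => rpow_nonneg (hP.nonneg _ _) _
  have hfactor : ∑ j ∈ P, ∏ k : Fin d, Λ k.val (j k) ^ τ' ≤
      ∏ k : Fin d, (1 + ratioSum Λ 0 τ * Λ k 1 ^ τ') := by
    refine (prod_univ_sum (fun k : Fin d => range (N k)) fun k n => Λ k.val n ^ τ').symm.trans_le ?_
    exact prod_le_prod (fun k _ => sum_nonneg fun n _ => rpow_nonneg (hP.nonneg _ _) _)
      fun k _ => hP.sum_range_rpow_le hτ hττ' k (N k)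
  rw [hcount, rpow_neg hε.le, ← div_eq_inv_mul, le_div_iff₀ (by positivity)]
  exact hmarkov.trans hfactor

theorem le_infoCount (hP : PropertyP Λ) {k : ℕ} {ε : ℝ} (hε : 0 < ε) (hεk : ε ^ 2 < Λ k 1) :
    k + 1 ≤ infoCount Λ (k + 1) ε := by
  -- needed because `Nat.card` of an infinite type is `0`
  have : Finite (infoSet Λ (k + 1) ε) := (hP.infoSet_finite _ hε).to_subtype
  have hmem : ∀ i : Fin (k + 1), (Pi.single i 1 : Fin (k + 1) → ℕ) ∈ infoSet Λ (k + 1) ε := by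
    intro i
    have hprod : ∏ m : Fin (k + 1), Λ m.val ((Pi.single i 1 : Fin (k + 1) → ℕ) m) = Λ i.val 1 := by
      rw [Fintype.prod_eq_single i fun m hm => by rw [Pi.single_eq_of_ne hm, hP.first],
        Pi.single_eq_same]
    show ε ^ 2 < _
    rw [hprod]
    exact hεk.trans_le (hP.h_anti (Nat.lt_succ_iff.1 i.isLt))
  have hinj : Function.Injective fun i => (⟨Pi.single i 1, hmem i⟩ : infoSet Λ (k + 1) ε) :=
    fun i i' h => by simpa [Pi.single_apply] using congrFun (congrArg Subtype.val h) i
  simpa [infoCount_eq_card_infoSet] using Nat.card_le_card_of_injective _ hinj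

theorem exists_eventually_le_rpow_of_isSPT (hP : PropertyP Λ) (hSPT : IsSPT Λ) :
    ∃ a : ℝ, 0 < a ∧ ∀ᶠ k : ℕ in atTop, Λ k 1 ≤ ((k : ℝ) + 1) ^ (-a) := by
  obtain ⟨C, p, -, hp, hbound⟩ := hSPT
  set δ := 1 / (p + 1)
  have hδ : 0 < δ := by positivity
  have hδp : δ * p / 2 ≤ 1 / 2 := by
    rw [div_mul_eq_mul_div, one_mul, div_le_div_iff_of_pos_right two_pos]
    exact div_le_one_of_le₀ (by linarith) (by linarith)
  refine ⟨δ, hδ, ?_⟩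
  filter_upwards [eventually_gt_atTop ⌈(C * 2 ^ p) ^ 2⌉₊] with k hk
  set x : ℝ := k + 1
  have hx : 1 ≤ x := by simp [x]
  by_contra! hlarge
  set ε := x ^ (-δ / 2) / 2
  have hxδ : x ^ (-δ / 2) ≤ 1 := rpow_le_one_of_one_le_of_nonpos hx (by linarith)
  have hε : ε ∈ Ioo (0 : ℝ) 1 := ⟨by positivity, show x ^ (-δ / 2) / 2 < 1 by linarith⟩
  have hεsq : ε ^ 2 < Λ k 1 := by
    have : ε ^ 2 = x ^ (-δ) / 4 := by
      rw [div_pow, ← rpow_natCast, ← rpow_mul (by positivity)]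
      norm_num
    rw [this]
    linarith [rpow_pos_of_pos (by positivity : 0 < x) (-δ)]
  have hεp : ε ^ (-p) = 2 ^ p * x ^ (δ * p / 2) := by
    rw [div_rpow (by positivity) zero_le_two, ← rpow_mul (by positivity),
      rpow_neg zero_le_two, div_inv_eq_mul, mul_comm]
    ring_nf
  have hxle : x ≤ C * 2 ^ p * x ^ (δ * p / 2) :=
    calc x = ((k + 1 : ℕ) : ℝ) := by push_cast; rfl
      _ ≤ infoCount Λ (k + 1) ε := by exact_mod_cast hP.le_infoCount hε.1 hεsq
      _ ≤ C * ε ^ (-p) := hbound _ (Nat.le_add_left 1 k) ε hε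
      _ = C * 2 ^ p * x ^ (δ * p / 2) := by rw [hεp, mul_assoc]
  exact ((Nat.lt_of_ceil_lt hk).trans (lt_add_one _)).not_ge (le_sq_of_le_mul_rpow hx hδp hxle)

theorem isSPT_of_eventually_le_rpow (hP : PropertyP Λ) {a : ℝ} (ha : 0 < a)
    (hdecay : ∀ᶠ k : ℕ in atTop, Λ k 1 ≤ ((k : ℝ) + 1) ^ (-a)) : IsSPT Λ := by
  obtain ⟨τ, hτ⟩ := hP.cond3
  set τ' := max τ (2 / a)
  have hττ' : τ ≤ τ' := le_max_left _ _
  have haτ' : 1 < a * τ' :=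
    calc (1 : ℝ) < a * (2 / a) := by rw [mul_div_cancel₀ _ ha.ne']; norm_num
      _ ≤ a * τ' := by gcongr; exact le_max_right _ _
  set B := ratioSum Λ 0 τ
  have hB : 0 ≤ B := tsum_nonneg fun j =>
    rpow_nonneg (div_nonneg (hP.nonneg _ _) (hP.second_pos 0).le) _
  have hsum : Summable fun k => B * Λ k 1 ^ τ' :=
    (summable_rpow_of_eventually_le_rpow_neg (fun k => (hP.second_pos k).le)
      (hτ.1.le.trans hττ') haτ' hdecay).mul_left B
  refine ⟨exp (∑' k, B * Λ k 1 ^ τ'), 2 * τ', (exp_pos _).le, by linarith [hτ.1], ?_⟩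
  intro d _ ε hε
  calc (infoCount Λ d ε : ℝ)
      ≤ ε ^ (-(2 * τ')) * ∏ k : Fin d, (1 + B * Λ k 1 ^ τ') := hP.infoCount_le hτ hττ' d hε.1
    _ ≤ ε ^ (-(2 * τ')) * exp (∑' k, B * Λ k 1 ^ τ') :=
        mul_le_mul_of_nonneg_left (prod_one_add_le_exp_tsum
          (fun k => mul_nonneg hB (rpow_nonneg (hP.nonneg _ _) _)) hsum d) (rpow_nonneg hε.1.le _)
    _ = exp (∑' k, B * Λ k 1 ^ τ') * ε ^ (-(2 * τ')) := mul_comm _ _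

end PropertyP

/-- Under Property (P), the problem is strongly polynomially tractable iff
`A_* = liminf_{d→∞} ln(h_d⁻¹)/ln d > 0`. -/
theorem spt_iff_liminf_pos (Λ : ℕ → ℕ → ℝ) (hP : PropertyP Λ) :
    IsSPT Λ ↔
      0 < Filter.liminf
        (fun k : ℕ => (Real.log (Λ k 1)⁻¹ / Real.log ((k : ℝ) + 1) : EReal))
        Filter.atTop := by
  rw [liminf_log_inv_div_log_pos_iff hP.second_pos]
  exact ⟨hP.exists_eventually_le_rpow_of_isSPT,
    fun ⟨_, ha, hdecay⟩ => hP.isSPT_of_eventually_le_rpow ha hdecay⟩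
end

section
/- Fix t > 0. Suppose there exists τ > 0 such that the sums ∑_{j=1}^∞ (λ_{d,j}/λ_{d,1})^τ are finite and lim_{d→∞} d^{-t} · ln(∑_{j=1}^∞ (λ_{d,j}/λ_{d,1})^τ) = 0. Then for every s > 0, ln n(ε,d)/(ε^{-s}+d^t) → 0 as ε^{-1}+d → ∞; that is, the problem is (s,t)-weakly tractable for every s > 0 for the normalized error criterion. -/
open Filter Real Set

/-!
Markov's inequality for the `τ`-th moment gives `n(ε,d) ≤ ε^{-2τ} S_d` with
`S_d = ∑_j (λ_{d,j}/λ_{d,1})^τ`, so `ln n(ε,d) ≤ 2τ ln ε⁻¹ + ln S_d`. Since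
`ln x ≤ η x^s + C_η` and, by hypothesis, `ln S_d ≤ η d^t + C'_η`, this gives
`ln n(ε,d) ≤ η (ε^{-s} + d^t) + C''_η` for every `η > 0`, while `ε^{-s} + d^t → ∞`.
-/

lemma nat_mul_le_tsum_of_forall_le {f : ℕ → ℝ} (hf : ∀ j, 0 ≤ f j) (hs : Summable f)
    {c : ℝ} {n : ℕ} (h : ∀ j < n, c ≤ f j) : n * c ≤ ∑' j, f j :=
  calc (n : ℝ) * c = ∑ _j ∈ Finset.range n, c := by simp
    _ ≤ ∑ j ∈ Finset.range n, f j :=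
        Finset.sum_le_sum fun j hj => h j (Finset.mem_range.1 hj)
    _ ≤ ∑' j, f j := hs.sum_le_tsum _ fun j _ => hf j

lemma log_sInf_le_log_tsum_rpow_div {a : ℕ → ℝ} (ha : ∀ j, 0 ≤ a j) (ha0 : 0 < a 0)
    {τ : ℝ} (hτ : 0 < τ) (hs : Summable fun j => (a j / a 0) ^ τ)
    {ε : ℝ} (hε0 : 0 < ε) (hε1 : ε ≤ 1) :
    Real.log (sInf {n : ℕ | a n ≤ ε ^ 2 * a 0} : ℕ) ≤
      2 * τ * Real.log ε⁻¹ + Real.log (∑' j, (a j / a 0) ^ τ) := by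
  set S := ∑' j, (a j / a 0) ^ τ
  set n := sInf {n : ℕ | a n ≤ ε ^ 2 * a 0}
  have hterm : ∀ j, 0 ≤ (a j / a 0) ^ τ := fun j => rpow_nonneg (div_nonneg (ha j) ha0.le) τ
  have hS : 1 ≤ S := by simpa [ha0.ne'] using hs.le_tsum 0 fun j _ => hterm j
  rcases n.eq_zero_or_pos with hn | hn
  · rw [hn, Nat.cast_zero, log_zero]
    have : 0 ≤ Real.log ε⁻¹ := log_nonneg ((one_le_inv₀ hε0).2 hε1)
    have : 0 ≤ Real.log S := log_nonneg hS
    positivity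
  have hbelow : ∀ j < n, (ε ^ 2) ^ τ ≤ (a j / a 0) ^ τ := fun j hj => by
    have hj : ε ^ 2 * a 0 < a j := not_le.1 (Nat.notMem_of_lt_sInf hj)
    exact rpow_le_rpow (by positivity) ((le_div_iff₀ ha0).2 hj.le) hτ.le
  have hmarkov : (n : ℝ) ≤ S / (ε ^ 2) ^ τ :=
    (le_div_iff₀ (by positivity)).2 (nat_mul_le_tsum_of_forall_le hterm hs hbelow)
  calc Real.log n ≤ Real.log (S / (ε ^ 2) ^ τ) := log_le_log (by exact_mod_cast hn) hmarkov
    _ = 2 * τ * Real.log ε⁻¹ + Real.log S := by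
      rw [log_div (by positivity) (by positivity), log_rpow (by positivity), log_pow, log_inv]
      push_cast
      ring

lemma exists_log_le_mul_rpow_add {s η : ℝ} (hs : 0 < s) (hη : 0 < η) :
    ∃ C, ∀ x : ℝ, 0 < x → Real.log x ≤ η * x ^ s + C := by
  refine ⟨-(Real.log (η * s) + 1) / s, fun x hx => ?_⟩
  have h := log_le_sub_one_of_pos (show 0 < η * s * x ^ s by positivity)
  rw [log_mul (by positivity) (by positivity), log_rpow hx] at h
  refine le_of_mul_le_mul_left ?_ hs
  rw [mul_add, mul_div_cancel₀ _ hs.ne']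
  linarith

lemma exists_forall_le_add_of_eventually_le {a b : ℕ → ℝ} (h : ∀ᶠ n in atTop, a n ≤ b n) :
    ∃ C, ∀ n, a n ≤ b n + C := by
  obtain ⟨N, hN⟩ := eventually_atTop.1 h
  obtain ⟨C, hC⟩ := ((Set.finite_lt_nat N).image fun n => a n - b n).bddAbove
  refine ⟨max C 0, fun n => ?_⟩
  rcases lt_or_ge n N with hn | hn
  · linarith [hC ⟨n, hn, rfl⟩, le_max_left C 0]
  · linarith [hN n hn, le_max_right C 0]

lemma tendsto_div_nhds_zero_of_forall_le_mul_add {α : Type*} {l : Filter α} {f g : α → ℝ}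
    (hg : Tendsto g l atTop) (hf : ∀ᶠ x in l, 0 ≤ f x)
    (hfg : ∀ η > 0, ∃ C, ∀ᶠ x in l, f x ≤ η * g x + C) :
    Tendsto (fun x => f x / g x) l (nhds 0) := by
  refine Asymptotics.IsLittleO.tendsto_div_nhds_zero (Asymptotics.IsLittleO.of_bound fun c hc => ?_)
  obtain ⟨C, hC⟩ := hfg (c / 2) (half_pos hc)
  filter_upwards [hf, hC, hg.eventually_ge_atTop (2 * C / c), hg.eventually_ge_atTop 0]
    with x hfx hCx hgC hg0
  rw [Real.norm_of_nonneg hfx, Real.norm_of_nonneg hg0]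
  have : 2 * C ≤ c * g x := by rwa [div_le_iff₀' hc] at hgC
  linarith

lemma eventually_mem_wtFilter :
    ∀ᶠ p : ℝ × ℕ in wtFilter, p.1 ∈ Ioo (0 : ℝ) 1 ∧ 1 ≤ p.2 :=
  mem_inf_of_right (mem_principal_self _)

lemma eventually_le_or_le_wtFilter (M D : ℝ) :
    ∀ᶠ p : ℝ × ℕ in wtFilter, M ≤ p.1⁻¹ ∨ D ≤ p.2 := by
  have h : ∀ᶠ p : ℝ × ℕ in wtFilter, M + D ≤ p.1⁻¹ + p.2 :=
    mem_inf_of_left (preimage_mem_comap (Ici_mem_atTop _))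
  filter_upwards [h] with p hp
  by_contra! hlt
  linarith [hlt.1, hlt.2]

lemma tendsto_rpow_neg_add_rpow_wtFilter {s t : ℝ} (hs : 0 < s) (ht : 0 < t) :
    Tendsto (fun p : ℝ × ℕ => p.1 ^ (-s) + (p.2 : ℝ) ^ t) wtFilter atTop := by
  refine tendsto_atTop.2 fun K => ?_
  obtain ⟨M, hM⟩ := eventually_atTop.1 ((tendsto_rpow_atTop hs).eventually_ge_atTop K)
  obtain ⟨D, hD⟩ := eventually_atTop.1 ((tendsto_rpow_atTop ht).eventually_ge_atTop K)
  filter_upwards [eventually_le_or_le_wtFilter M D, eventually_mem_wtFilter]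
    with p hp hmem
  have hε0 : 0 < p.1 := hmem.1.1
  have hε : 0 ≤ p.1 ^ (-s) := rpow_nonneg hε0.le _
  have hd : 0 ≤ (p.2 : ℝ) ^ t := rpow_nonneg p.2.cast_nonneg _
  rcases hp with h | h
  · linarith [rpow_neg_eq_inv_rpow p.1 s ▸ hM _ h]
  · linarith [hD _ h]

-- `μ d j` stands for `λ_{d,j+1}`: the eigenvalues are indexed from `0`.
theorem stwt_of_sum_condition_general (μ : ℕ → ℕ → ℝ) (t : ℝ) (ht : 0 < t)
    (hnn : ∀ d : ℕ, 1 ≤ d → ∀ j : ℕ, 0 ≤ μ d j)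
    (hpos : ∀ d : ℕ, 1 ≤ d → 0 < μ d 0)
    (τ : ℝ) (hτ : 0 < τ)
    (hsum : ∀ d : ℕ, 1 ≤ d → Summable fun j : ℕ => (μ d j / μ d 0) ^ τ)
    (hlim : Filter.Tendsto
      (fun d : ℕ => (d : ℝ) ^ (-t) * Real.log (∑' j : ℕ, (μ d j / μ d 0) ^ τ))
      Filter.atTop (nhds 0)) :
    ∀ s : ℝ, 0 < s →
      Filter.Tendsto
        (fun p : ℝ × ℕ =>
          Real.log ((sInf {n : ℕ | μ p.2 n ≤ p.1 ^ 2 * μ p.2 0} : ℕ) : ℝ) /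
            (p.1 ^ (-s) + (p.2 : ℝ) ^ t))
        wtFilter (nhds 0) := by
  intro s hs
  set L : ℕ → ℝ := fun d => Real.log (∑' j : ℕ, (μ d j / μ d 0) ^ τ)
  have hL : ∀ η > 0, ∃ C, ∀ d, L d ≤ η * (d : ℝ) ^ t + C := fun η hη =>
    exists_forall_le_add_of_eventually_le <| by
      filter_upwards [hlim.eventually (gt_mem_nhds hη), eventually_ge_atTop 1] with d hd hd1
      have hdt : 0 < (d : ℝ) ^ t := rpow_pos_of_pos (by exact_mod_cast hd1) t
      rw [rpow_neg (by positivity), inv_mul_lt_iff₀ hdt] at hd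
      linarith
  refine tendsto_div_nhds_zero_of_forall_le_mul_add (tendsto_rpow_neg_add_rpow_wtFilter hs ht)
    (Eventually.of_forall fun p => log_natCast_nonneg _) fun η hη => ?_
  obtain ⟨C₁, hC₁⟩ := exists_log_le_mul_rpow_add hs (show 0 < η / (2 * τ) by positivity)
  obtain ⟨C₂, hC₂⟩ := hL η hη
  refine ⟨2 * τ * C₁ + C₂, ?_⟩
  filter_upwards [eventually_mem_wtFilter] with p ⟨⟨hε0, hε1⟩, hd⟩
  obtain ⟨ε, d⟩ := p
  calc _ ≤ 2 * τ * Real.log ε⁻¹ + L d :=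
        log_sInf_le_log_tsum_rpow_div (hnn d hd) (hpos d hd) hτ (hsum d hd) hε0 hε1.le
    _ ≤ 2 * τ * (η / (2 * τ) * ε⁻¹ ^ s + C₁) + (η * (d : ℝ) ^ t + C₂) := by
        gcongr
        exacts [hC₁ _ (inv_pos.2 hε0), hC₂ d]
    _ = η * (ε ^ (-s) + (d : ℝ) ^ t) + (2 * τ * C₁ + C₂) := by
        rw [rpow_neg_eq_inv_rpow]
        field_simp
        ring

/-- Lemma 2.5: Fix `t > 0`. If there is `τ > 0` such that the sums
`∑_j (λ_{d,j}/λ_{d,1})^τ` are finite and `d^{-t} ln(∑_j (λ_{d,j}/λ_{d,1})^τ) → 0`,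
then for every `s > 0`, `ln n(ε,d)/(ε^{-s}+d^t) → 0` as `ε⁻¹ + d → ∞`, where
`n(ε,d) = min{n ≥ 0 : λ_{d,n+1} ≤ ε² λ_{d,1}}` (here `μ d j = λ_{d,j+1}`, 0-indexed in `j`). -/
theorem stwt_of_sum_condition (μ : ℕ → ℕ → ℝ) (t : ℝ) (ht : 0 < t)
    (hnn : ∀ d : ℕ, 1 ≤ d → ∀ j : ℕ, 0 ≤ μ d j)
    (hanti : ∀ d : ℕ, 1 ≤ d → Antitone (μ d))
    (hpos : ∀ d : ℕ, 1 ≤ d → 0 < μ d 0)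
    (τ : ℝ) (hτ : 0 < τ)
    (hsum : ∀ d : ℕ, 1 ≤ d → Summable fun j : ℕ => (μ d j / μ d 0) ^ τ)
    (hlim : Filter.Tendsto
      (fun d : ℕ => (d : ℝ) ^ (-t) * Real.log (∑' j : ℕ, (μ d j / μ d 0) ^ τ))
      Filter.atTop (nhds 0)) :
    ∀ s : ℝ, 0 < s →
      Filter.Tendsto
        (fun p : ℝ × ℕ =>
          Real.log ((sInf {n : ℕ | μ p.2 n ≤ p.1 ^ 2 * μ p.2 0} : ℕ) : ℝ) /
            (p.1 ^ (-s) + (p.2 : ℝ) ^ t))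
        wtFilter (nhds 0) :=
  stwt_of_sum_condition_general μ t ht hnn hpos τ hτ hsum hlim
end

section
/- For the Euler-kernel approximation problem under the normalized error criterion, the problem is strongly polynomially tractable if and only if liminf_{k→∞} r_k/ln k > 0, and in that case the exponent of SPT is p* = max{2/A_*, 1/(r_1+1)}, where A_* = 2 ln 3 · liminf_{k→∞} r_k/ln k. -/
open Filter Real Set

/-- Normalized eigenvalues of the Euler-kernel problem: `λ(k,j)/λ(k,1) = (2j-1)^{-(2r_k+2)}`
(0-indexed: `eulerLam r k j = (2(j+1)-1)^{-(2 r_{k+1} + 2)}`). -/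
noncomputable def eulerLam (r : ℕ → ℕ) (k j : ℕ) : ℝ :=
  ((2 * (j : ℝ) + 1) ^ (2 * r k + 2))⁻¹

open Topology

/-!
Write `s_k = p (r_k + 1)`. Raising `ε² < ∏ λ(k, j_k)` to the power `p/2` and summing over all
multi-indices gives
`n(ε,d) ε^p ≤ ∏_k ∑_j (2j+1)^{-s_k} ≤ ∏_k (1 + c 3^{-p r_k}) ≤ exp (c ∑_k 3^{-p r_k})`,
which is bounded in `d` once `s_1 > 1` and `∑_k 3^{-p r_k} < ∞`; the latter holds as soon as
`p ln 3 · liminf r_k / ln k > 1`.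

Conversely, for `d = 1` the indices `j ≤ N` all count when `ε ≈ (2N+1)^{-(r_1+1)}`, which forces
`p ≥ 1/(r_1+1)`; for `d = k` and `ε` just below `3^{-(r_k+1)}` the `k` unit vectors all count,
so `k ≤ C 3^{p r_k}` and `liminf r_k / ln k ≥ 1/(p ln 3)`.
-/

def HasSPTBound (Λ : ℕ → ℕ → ℝ) (p : ℝ) : Prop :=
  ∃ C : ℝ, 0 ≤ C ∧ ∀ d : ℕ, 1 ≤ d → ∀ ε : ℝ, ε ∈ Set.Ioo (0 : ℝ) 1 →
    (infoCount Λ d ε : ℝ) ≤ C * ε ^ (-p)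

noncomputable def liminfDivLog (u : ℕ → ℝ) : EReal :=
  Filter.liminf (fun k : ℕ => (u k / Real.log ((k : ℝ) + 1) : EReal)) Filter.atTop

section Tractability

variable {Λ : ℕ → ℕ → ℝ}

lemma isSPT_iff_exists_hasSPTBound : IsSPT Λ ↔ ∃ p, 0 ≤ p ∧ HasSPTBound Λ p :=
  ⟨fun ⟨C, p, hC, hp, h⟩ => ⟨p, hp, C, hC, h⟩, fun ⟨p, hp, C, hC, h⟩ => ⟨C, p, hC, hp, h⟩⟩

lemma sptExponent_eq_of_forall {M : ℝ} (hM : 0 ≤ M)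
    (hlower : ∀ p, 0 ≤ p → HasSPTBound Λ p → M ≤ p) (hupper : ∀ p, M < p → HasSPTBound Λ p) :
    sptExponent Λ = M := by
  change sInf {p | 0 ≤ p ∧ HasSPTBound Λ p} = M
  have hsub : Ioi M ⊆ {p | 0 ≤ p ∧ HasSPTBound Λ p} := fun p hp => ⟨hM.trans hp.le, hupper p hp⟩
  refine le_antisymm ?_ (le_csInf (nonempty_Ioi.mono hsub) fun p hp => hlower p hp.1 hp.2)
  calc sInf {p | 0 ≤ p ∧ HasSPTBound Λ p} ≤ sInf (Ioi M) :=
        csInf_le_csInf ⟨0, fun p hp => hp.1⟩ nonempty_Ioi hsub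
    _ = M := csInf_Ioi

variable {d : ℕ} {ε : ℝ}

lemma le_infoCount_of_injective {ι : Type*}
    (hfin : {j : Fin d → ℕ | ε ^ 2 < ∏ k : Fin d, Λ k.val (j k)}.Finite)
    (f : ι → Fin d → ℕ) (hf : Function.Injective f)
    (hmem : ∀ i, ε ^ 2 < ∏ k : Fin d, Λ k.val (f i k)) :
    Nat.card ι ≤ infoCount Λ d ε :=
  have := hfin.to_subtype
  Nat.card_le_card_of_injective (fun i => ⟨f i, hmem i⟩) fun _ _ h => hf (congrArg Subtype.val h)

/-- Holds trivially when the counted set is infinite, `infoCount` then being `0`. -/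
lemma infoCount_mul_rpow_le_prod_tsum {p : ℝ} (hΛ : ∀ k j, 0 ≤ Λ k j) (hp : 0 ≤ p) (hε : 0 < ε)
    (hsum : ∀ k, Summable fun j => Λ k j ^ (p / 2)) :
    (infoCount Λ d ε : ℝ) * ε ^ p ≤ ∏ k : Fin d, ∑' j, Λ k j ^ (p / 2) := by
  have hterm : ∀ k j, 0 ≤ Λ k j ^ (p / 2) := fun k j => rpow_nonneg (hΛ k j) _
  have hrhs : 0 ≤ ∏ k : Fin d, ∑' j, Λ k j ^ (p / 2) :=
    Finset.prod_nonneg fun k _ => tsum_nonneg (hterm k)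
  rcases {j : Fin d → ℕ | ε ^ 2 < ∏ k : Fin d, Λ k.val (j k)}.finite_or_infinite
    with hfin | hinf
  swap
  · rwa [infoCount, Nat.card_coe_set_eq, hinf.ncard, Nat.cast_zero, zero_mul]
  set F := hfin.toFinset
  have hbound : ∀ j ∈ F, ε ^ p ≤ ∏ k : Fin d, Λ k (j k) ^ (p / 2) := by
    intro j hj
    rw [finsetProd_rpow _ _ fun k _ => hΛ _ _]
    calc ε ^ p = (ε ^ 2) ^ (p / 2) := by rw [← rpow_natCast, ← rpow_mul hε.le]; ring_nf
      _ ≤ _ := rpow_le_rpow (by positivity) (hfin.mem_toFinset.1 hj).le (by positivity)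
  calc (infoCount Λ d ε : ℝ) * ε ^ p = ∑ _j ∈ F, ε ^ p := by
        rw [Finset.sum_const, infoCount, Nat.card_coe_set_eq, ncard_eq_toFinset_card _ hfin,
          nsmul_eq_mul]
    _ ≤ ∑ j ∈ F, ∏ k : Fin d, Λ k (j k) ^ (p / 2) := Finset.sum_le_sum hbound
    _ ≤ ∑ j ∈ Fintype.piFinset fun k => F.image (· k), ∏ k : Fin d, Λ k (j k) ^ (p / 2) :=
        Finset.sum_le_sum_of_subset_of_nonneg
          (fun j hj => Fintype.mem_piFinset.2 fun k => Finset.mem_image_of_mem _ hj)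
          fun j _ _ => Finset.prod_nonneg fun k _ => hterm _ _
    _ = ∏ k : Fin d, ∑ m ∈ F.image (· k), Λ k m ^ (p / 2) := by rw [Finset.prod_univ_sum]
    _ ≤ ∏ k : Fin d, ∑' j, Λ k j ^ (p / 2) :=
        Finset.prod_le_prod (fun k _ => Finset.sum_nonneg fun m _ => hterm _ _)
          fun k _ => (hsum k).sum_le_tsum _ fun m _ => hterm _ _

end Tractability

section Asymptotics

lemma one_le_of_forall_le_mul_rpow {C a : ℝ}
    (h : ∀ N : ℕ, (N : ℝ) + 1 ≤ C * ((N : ℝ) + 1) ^ a) : 1 ≤ a := by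
  by_contra! ha
  have hlim : Tendsto (fun N : ℕ => ((N : ℝ) + 1) ^ (1 - a)) atTop atTop :=
    (tendsto_rpow_atTop (by linarith)).comp
      (tendsto_atTop_add_const_right _ 1 tendsto_natCast_atTop_atTop)
  obtain ⟨N, hN⟩ := (hlim.eventually_gt_atTop C).exists
  have hpos : (0 : ℝ) < (N : ℝ) + 1 := by positivity
  have hsplit : (N : ℝ) + 1 = ((N : ℝ) + 1) ^ (1 - a) * ((N : ℝ) + 1) ^ a := by
    rw [← rpow_add hpos, sub_add_cancel, rpow_one]
  nlinarith [h N, rpow_pos_of_pos hpos a]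

lemma tendsto_log_natCast_add_one_atTop :
    Tendsto (fun k : ℕ => Real.log ((k : ℝ) + 1)) atTop atTop :=
  tendsto_log_atTop.comp (tendsto_atTop_add_const_right _ 1 tendsto_natCast_atTop_atTop)

lemma le_liminfDivLog_of_log_le {u : ℕ → ℝ} {a c : ℝ} (ha : 0 < a)
    (h : ∀ k : ℕ, Real.log ((k : ℝ) + 1) ≤ a * u k + c) :
    ((a⁻¹ : ℝ) : EReal) ≤ liminfDivLog u := by
  have hlim : Tendsto (fun k : ℕ => ((a⁻¹ - c / a / Real.log ((k : ℝ) + 1) : ℝ) : EReal)) atTop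
      (𝓝 (a⁻¹ : ℝ)) := by
    refine EReal.tendsto_coe.2 ?_
    simpa using tendsto_const_nhds.sub
      (tendsto_const_nhds.div_atTop tendsto_log_natCast_add_one_atTop)
  rw [← hlim.liminf_eq]
  refine liminf_le_liminf ?_
  filter_upwards [eventually_ge_atTop 1] with k hk
  have hlog : 0 < Real.log ((k : ℝ) + 1) := log_pos (by norm_cast; omega)
  rw [← EReal.coe_div, EReal.coe_le_coe_iff, le_div_iff₀ hlog,
    show (a⁻¹ - c / a / Real.log ((k : ℝ) + 1)) * Real.log ((k : ℝ) + 1)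
      = (Real.log ((k : ℝ) + 1) - c) / a by field_simp, div_le_iff₀ ha]
  linarith [h k]

lemma summable_exp_neg_mul_of_inv_lt_liminfDivLog {u : ℕ → ℝ} {a : ℝ} (ha : 0 < a)
    (h : ((a⁻¹ : ℝ) : EReal) < liminfDivLog u) : Summable fun k => exp (-(a * u k)) := by
  obtain ⟨b, hab, hbu⟩ := EReal.exists_between_coe_real h
  have hab1 : 1 < a * b := by
    rw [EReal.coe_lt_coe_iff, inv_lt_iff_one_lt_mul₀ ha] at hab; linarith
  have hgeom : Summable fun k : ℕ => ((k : ℝ) + 1) ^ (-(a * b)) := by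
    simpa using (summable_nat_add_iff 1).2 (Real.summable_nat_rpow.2 (by linarith))
  refine hgeom.of_norm_bounded_eventually_nat ?_
  filter_upwards [eventually_lt_of_lt_liminf hbu, eventually_ge_atTop 1] with k hk hk1
  have hlog : 0 < Real.log ((k : ℝ) + 1) := log_pos (by norm_cast; omega)
  rw [← EReal.coe_div, EReal.coe_lt_coe_iff, lt_div_iff₀ hlog] at hk
  rw [norm_of_nonneg (exp_pos _).le, rpow_def_of_pos (by positivity)]
  exact exp_le_exp.2 (by nlinarith)

lemma inv_mul_toReal_le_iff {L : EReal} (hL : 0 < L) {a p : ℝ} (ha : 0 < a) (hp : 0 < p) :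
    (a * L.toReal)⁻¹ ≤ p ↔ (((p * a)⁻¹ : ℝ) : EReal) ≤ L := by
  induction L using EReal.rec with
  | bot => exact absurd hL (not_lt.2 bot_le)
  | coe x =>
    have hx : 0 < x := by exact_mod_cast hL
    rw [EReal.toReal_coe, EReal.coe_le_coe_iff, inv_le_iff_one_le_mul₀ (by positivity),
      inv_le_iff_one_le_mul₀ (by positivity), show x * (p * a) = p * (a * x) by ring]
  | top => exact iff_of_true (by simpa using hp.le) le_top

lemma inv_mul_toReal_lt_iff {L : EReal} (hL : 0 < L) {a p : ℝ} (ha : 0 < a) (hp : 0 < p) :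
    (a * L.toReal)⁻¹ < p ↔ (((p * a)⁻¹ : ℝ) : EReal) < L := by
  induction L using EReal.rec with
  | bot => exact absurd hL (not_lt.2 bot_le)
  | coe x =>
    have hx : 0 < x := by exact_mod_cast hL
    rw [EReal.toReal_coe, EReal.coe_lt_coe_iff, inv_lt_iff_one_lt_mul₀ (by positivity),
      inv_lt_iff_one_lt_mul₀ (by positivity), show x * (p * a) = p * (a * x) by ring]
  | top => exact iff_of_true (by simpa using hp) (EReal.coe_lt_top _)

end Asymptotics

section OddZeta

lemma summable_odd_rpow_neg {s : ℝ} (hs : 1 < s) :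
    Summable fun j : ℕ => (2 * (j : ℝ) + 1) ^ (-s) := by
  have hshift : Summable fun j : ℕ => ((j : ℝ) + 1) ^ (-s) := by
    simpa using (summable_nat_add_iff 1).2 (Real.summable_nat_rpow.2 (by linarith))
  refine hshift.of_nonneg_of_le (fun j => by positivity) fun j => ?_
  exact rpow_le_rpow_of_nonpos (by positivity) (by linarith [j.cast_nonneg (α := ℝ)])
    (by linarith)

lemma tsum_odd_rpow_neg_add_le {s t : ℝ} (hs : 1 < s) (ht : 0 ≤ t) :
    ∑' j : ℕ, (2 * (j : ℝ) + 1) ^ (-(s + t)) ≤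
      1 + (∑' j : ℕ, (2 * (j : ℝ) + 1) ^ (-s)) * 3 ^ (-t) := by
  rw [(summable_odd_rpow_neg (by linarith : 1 < s + t)).tsum_eq_zero_add, ← tsum_mul_right]
  simp only [Nat.cast_zero, mul_zero, zero_add, one_rpow, Nat.cast_add, Nat.cast_one]
  refine (add_le_add_iff_left 1).2 (Summable.tsum_le_tsum (fun j => ?_) ?_
    ((summable_odd_rpow_neg hs).mul_right _))
  · have hj : (0 : ℝ) ≤ j := j.cast_nonneg
    rw [neg_add, rpow_add (by positivity)]
    gcongr ?_ * ?_
    · exact rpow_le_rpow_of_nonpos (by positivity) (by linarith) (by linarith)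
    · exact rpow_le_rpow_of_nonpos (by norm_num) (by linarith) (by linarith)
  · have := (summable_nat_add_iff 1).2 (summable_odd_rpow_neg (s := s + t) (by linarith))
    push_cast at this
    exact this

end OddZeta

section Accuracy

/- The factor `1/2` puts `ε²` strictly below the threshold `x^{-2a}` at the price of the constant
`2^p` only, which is why the lower bounds come out sharp. -/

variable {x a : ℝ}

lemma half_rpow_neg_mem_Ioo (hx : 1 ≤ x) (ha : 0 ≤ a) : x ^ (-a) / 2 ∈ Ioo (0 : ℝ) 1 := by
  have hpos : 0 < x ^ (-a) := rpow_pos_of_pos (by linarith) _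
  have hle : x ^ (-a) ≤ 1 := rpow_le_one_of_one_le_of_nonpos hx (by linarith)
  constructor <;> linarith

lemma sq_half_rpow_neg_lt (hx : 1 ≤ x) : (x ^ (-a) / 2) ^ 2 < x ^ (-(2 * a)) := by
  have hpos : 0 < x ^ (-a) := rpow_pos_of_pos (by linarith) _
  rw [show -(2 * a) = -a * (2 : ℕ) by push_cast; ring, rpow_mul_natCast (by linarith)]
  nlinarith

lemma half_rpow_neg_rpow_neg (hx : 0 < x) (p : ℝ) :
    (x ^ (-a) / 2) ^ (-p) = 2 ^ p * x ^ (p * a) := by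
  rw [div_rpow (rpow_nonneg hx.le _) (by norm_num), ← rpow_mul hx.le, rpow_neg (by norm_num),
    div_inv_eq_mul, neg_mul_neg, mul_comm, mul_comm a]

end Accuracy

section EulerKernel

variable (r : ℕ → ℕ)

lemma eulerLam_eq_rpow (k j : ℕ) :
    eulerLam r k j = (2 * (j : ℝ) + 1) ^ (-(2 * ((r k : ℝ) + 1))) := by
  rw [eulerLam, rpow_neg (by positivity), ← rpow_natCast]
  push_cast
  ring_nf

lemma eulerLam_rpow_half (p : ℝ) (k j : ℕ) :
    eulerLam r k j ^ (p / 2) = (2 * (j : ℝ) + 1) ^ (-(p * ((r k : ℝ) + 1))) := by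
  rw [eulerLam_eq_rpow, ← rpow_mul (by positivity)]
  ring_nf

lemma eulerLam_nonneg (k j : ℕ) : 0 ≤ eulerLam r k j := by
  unfold eulerLam; positivity

lemma eulerLam_zero_right (k : ℕ) : eulerLam r k 0 = 1 := by
  simp [eulerLam]

lemma eulerLam_le_inv (k j : ℕ) : eulerLam r k j ≤ ((j : ℝ) + 1)⁻¹ := by
  have hj : (0 : ℝ) ≤ j := j.cast_nonneg
  unfold eulerLam
  gcongr
  calc (j : ℝ) + 1 ≤ 2 * j + 1 := by linarith
    _ ≤ (2 * j + 1) ^ (2 * r k + 2) := le_self_pow₀ (by linarith) (by omega)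

lemma antitone_eulerLam (k : ℕ) : Antitone (eulerLam r k) := by
  intro i j hij
  simp only [eulerLam]
  gcongr

lemma prod_eulerLam_le {d : ℕ} (j : Fin d → ℕ) (k : Fin d) :
    ∏ i : Fin d, eulerLam r i (j i) ≤ eulerLam r k (j k) := by
  rw [← Finset.mul_prod_erase _ _ (Finset.mem_univ k)]
  exact mul_le_of_le_one_right (eulerLam_nonneg r _ _) (Finset.prod_le_one
    (fun i _ => eulerLam_nonneg r _ _)
    fun i _ => (eulerLam_le_inv r _ _).trans (inv_le_one_of_one_le₀ (by simp)))

lemma finite_setOf_sq_lt_prod_eulerLam (d : ℕ) {ε : ℝ} (hε : 0 < ε) :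
    {j : Fin d → ℕ | ε ^ 2 < ∏ k : Fin d, eulerLam r k.val (j k)}.Finite := by
  refine (Set.Finite.pi fun _ : Fin d => finite_Iio ⌈(ε ^ 2)⁻¹⌉₊).subset fun j hj k _ => ?_
  have hlt := (hj.trans_le (prod_eulerLam_le r j k)).trans_le (eulerLam_le_inv r _ _)
  rw [lt_inv_comm₀ (by positivity) (by positivity)] at hlt
  exact Nat.lt_ceil.2 (by linarith)

lemma le_infoCount_eulerLam_one {N : ℕ} {ε : ℝ} (hε : 0 < ε) (h : ε ^ 2 < eulerLam r 0 N) :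
    N + 1 ≤ infoCount (eulerLam r) 1 ε := by
  simpa using le_infoCount_of_injective (finite_setOf_sq_lt_prod_eulerLam r 1 hε)
    (fun (n : Fin (N + 1)) _ => (n : ℕ)) (fun a b hab => Fin.ext (congrFun hab 0))
    fun n => by simpa using h.trans_le (antitone_eulerLam r 0 (Nat.lt_succ_iff.1 n.isLt))

end EulerKernel

section EulerSPT

variable {r : ℕ → ℕ} {p : ℝ}

lemma antitone_eulerLam_left (hr : Monotone r) (j : ℕ) :
    Antitone fun k => eulerLam r k j := by
  intro k l hkl
  have hj : (0 : ℝ) ≤ j := j.cast_nonneg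
  simp only [eulerLam]
  gcongr
  · linarith
  · exact hr hkl

lemma le_infoCount_eulerLam (hr : Monotone r) {k : ℕ} {ε : ℝ} (hε : 0 < ε)
    (h : ε ^ 2 < eulerLam r k 1) :
    k + 1 ≤ infoCount (eulerLam r) (k + 1) ε := by
  have hunit : ∀ i : Fin (k + 1),
      ∏ l : Fin (k + 1), eulerLam r l.val ((Pi.single i 1 : Fin (k + 1) → ℕ) l) =
        eulerLam r i 1 := by
    intro i
    rw [Fintype.prod_eq_single i fun l hl => by rw [Pi.single_eq_of_ne hl, eulerLam_zero_right],
      Pi.single_eq_same]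
  simpa using le_infoCount_of_injective (finite_setOf_sq_lt_prod_eulerLam r (k + 1) hε)
    (fun i : Fin (k + 1) => (Pi.single i 1 : Fin (k + 1) → ℕ))
    (fun a b hab => by simpa [Pi.single_apply] using congrFun hab a)
    fun i => by
      rw [hunit]
      exact h.trans_le (antitone_eulerLam_left hr 1 (Nat.lt_succ_iff.1 i.isLt))

lemma HasSPTBound.one_le_mul_eulerLam (h : HasSPTBound (eulerLam r) p) (hp : 0 ≤ p) :
    1 ≤ p * ((r 0 : ℝ) + 1) := by
  obtain ⟨C, hC, hbound⟩ := h
  set a := p * ((r 0 : ℝ) + 1)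
  refine one_le_of_forall_le_mul_rpow (C := C * 2 ^ p * 2 ^ a) fun N => ?_
  have hN : (0 : ℝ) ≤ N := N.cast_nonneg
  have hx : (1 : ℝ) ≤ 2 * N + 1 := by linarith
  have hε := half_rpow_neg_mem_Ioo hx (a := (r 0 : ℝ) + 1) (by positivity)
  have hcount := le_infoCount_eulerLam_one r hε.1
    (by rw [eulerLam_eq_rpow]; exact sq_half_rpow_neg_lt hx)
  calc (N : ℝ) + 1 ≤ infoCount (eulerLam r) 1 _ := by exact_mod_cast hcount
    _ ≤ C * _ := hbound 1 le_rfl _ hε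
    _ = C * 2 ^ p * (2 * N + 1) ^ a := by
        rw [half_rpow_neg_rpow_neg (by positivity)]; ring
    _ ≤ C * 2 ^ p * (2 * ((N : ℝ) + 1)) ^ a := by gcongr; linarith
    _ = C * 2 ^ p * 2 ^ a * ((N : ℝ) + 1) ^ a := by
        rw [mul_rpow (by norm_num) (by positivity)]; ring

lemma HasSPTBound.inv_le_liminfDivLog (hr : Monotone r) (h : HasSPTBound (eulerLam r) p)
    (hp : 0 < p) : (((p * Real.log 3)⁻¹ : ℝ) : EReal) ≤ liminfDivLog fun k => (r k : ℝ) := by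
  obtain ⟨C, -, hbound⟩ := h
  refine le_liminfDivLog_of_log_le (c := Real.log (C * 2 ^ p) + p * Real.log 3)
    (by positivity) fun k => ?_
  have hε := half_rpow_neg_mem_Ioo (x := 3) (a := (r k : ℝ) + 1) (by norm_num) (by positivity)
  have hcount := le_infoCount_eulerLam hr hε.1
    (by rw [eulerLam_eq_rpow, Nat.cast_one, show (2 : ℝ) * 1 + 1 = 3 by norm_num]
        exact sq_half_rpow_neg_lt (by norm_num))
  have hk : (k : ℝ) + 1 ≤ C * 2 ^ p * 3 ^ (p * ((r k : ℝ) + 1)) :=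
    calc (k : ℝ) + 1 ≤ infoCount (eulerLam r) (k + 1) _ := by exact_mod_cast hcount
      _ ≤ C * _ := hbound (k + 1) (by omega) _ hε
      _ = _ := by rw [half_rpow_neg_rpow_neg (by norm_num)]; ring
  have hC2 : 0 < C * 2 ^ p :=
    pos_of_mul_pos_left (lt_of_lt_of_le (by positivity) hk) (by positivity)
  calc Real.log ((k : ℝ) + 1) ≤ Real.log (C * 2 ^ p * 3 ^ (p * ((r k : ℝ) + 1))) :=
        log_le_log (by positivity) hk
    _ = p * Real.log 3 * r k + (Real.log (C * 2 ^ p) + p * Real.log 3) := by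
        rw [log_mul hC2.ne' (by positivity), log_rpow (by norm_num)]; ring

lemma hasSPTBound_eulerLam (hr : Monotone r) (hp : 1 < p * ((r 0 : ℝ) + 1))
    (hsum : Summable fun k => exp (-(p * Real.log 3 * r k))) :
    HasSPTBound (eulerLam r) p := by
  have hp0 : 0 < p := pos_of_mul_pos_left (by linarith : 0 < p * ((r 0 : ℝ) + 1)) (by positivity)
  set s₀ := p * ((r 0 : ℝ) + 1)
  set Z₀ := ∑' j : ℕ, (2 * (j : ℝ) + 1) ^ (-s₀)
  set t : ℕ → ℝ := fun k => p * ((r k : ℝ) - r 0)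
  have ht : ∀ k, 0 ≤ t k := fun k =>
    mul_nonneg hp0.le (sub_nonneg.2 (by exact_mod_cast hr (Nat.zero_le k)))
  have hst : ∀ k, p * ((r k : ℝ) + 1) = s₀ + t k := fun k => by ring
  have hZ₀ : 0 ≤ Z₀ := tsum_nonneg fun j => by positivity
  have hexp : ∀ k,
      (3 : ℝ) ^ (-t k) = exp (p * Real.log 3 * r 0) * exp (-(p * Real.log 3 * r k)) := by
    intro k
    rw [rpow_def_of_pos (by norm_num), ← exp_add]
    simp only [t]
    ring_nf
  have hsum_t : Summable fun k => Z₀ * 3 ^ (-t k) := by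
    simp_rw [hexp]; exact (hsum.mul_left _).mul_left _
  have hrow : ∀ k, ∑' j : ℕ, eulerLam r k j ^ (p / 2) ≤ 1 + Z₀ * 3 ^ (-t k) := by
    intro k
    simp_rw [eulerLam_rpow_half, hst]
    exact tsum_odd_rpow_neg_add_le hp (ht k)
  refine ⟨exp (∑' k, Z₀ * 3 ^ (-t k)), (exp_pos _).le, fun d _ ε hε => ?_⟩
  have hcount := infoCount_mul_rpow_le_prod_tsum (d := d) (eulerLam_nonneg r) hp0.le hε.1
    fun k => by
      simp_rw [eulerLam_rpow_half, hst]
      exact summable_odd_rpow_neg (by linarith [ht k])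
  have hεp : 0 < ε ^ p := rpow_pos_of_pos hε.1 p
  rw [rpow_neg hε.1.le, ← div_eq_mul_inv, le_div_iff₀ hεp]
  calc (infoCount (eulerLam r) d ε : ℝ) * ε ^ p ≤ ∏ k : Fin d, ∑' j, eulerLam r k j ^ (p / 2) :=
        hcount
    _ ≤ ∏ k : Fin d, (1 + Z₀ * 3 ^ (-t k)) :=
        Finset.prod_le_prod
          (fun k _ => tsum_nonneg fun j => rpow_nonneg (eulerLam_nonneg r _ _) _)
          fun k _ => hrow k
    _ ≤ exp (∑ k : Fin d, Z₀ * 3 ^ (-t k)) :=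
        prod_one_add_le_exp_sum _ fun k => mul_nonneg hZ₀ (by positivity)
    _ ≤ exp (∑' k, Z₀ * 3 ^ (-t k)) := by
        rw [exp_le_exp, Fin.sum_univ_eq_sum_range (fun k => Z₀ * 3 ^ (-t k))]
        exact hsum_t.sum_le_tsum _ fun k _ => mul_nonneg hZ₀ (by positivity)

lemma HasSPTBound.pos_liminfDivLog_and_max_le (hr : Monotone r) (h : HasSPTBound (eulerLam r) p)
    (hp : 0 ≤ p) :
    0 < liminfDivLog (fun k => (r k : ℝ)) ∧
      max (Real.log 3 * (liminfDivLog fun k => (r k : ℝ)).toReal)⁻¹ (1 / ((r 0 : ℝ) + 1)) ≤ p := by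
  have h1 := h.one_le_mul_eulerLam hp
  have hp0 : 0 < p :=
    pos_of_mul_pos_left (by linarith : 0 < p * ((r 0 : ℝ) + 1)) (by positivity)
  have h2 := h.inv_le_liminfDivLog hr hp0
  have hL : 0 < liminfDivLog fun k => (r k : ℝ) :=
    lt_of_lt_of_le (EReal.coe_pos.2 (by positivity)) h2
  refine ⟨hL, max_le ((inv_mul_toReal_le_iff hL (log_pos (by norm_num)) hp0).2 h2) ?_⟩
  rw [div_le_iff₀ (by positivity)]
  linarith

lemma hasSPTBound_eulerLam_of_max_lt (hr : Monotone r) (hL : 0 < liminfDivLog fun k => (r k : ℝ))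
    (hp : max (Real.log 3 * (liminfDivLog fun k => (r k : ℝ)).toReal)⁻¹ (1 / ((r 0 : ℝ) + 1)) < p) :
    HasSPTBound (eulerLam r) p := by
  obtain ⟨h1, h2⟩ := max_lt_iff.1 hp
  have hp0 : 0 < p := lt_trans (by positivity) h2
  refine hasSPTBound_eulerLam hr ?_ (summable_exp_neg_mul_of_inv_lt_liminfDivLog (by positivity)
    ((inv_mul_toReal_lt_iff hL (log_pos (by norm_num)) hp0).1 h1))
  rwa [div_lt_iff₀ (by positivity)] at h2

end EulerSPT

/-- When the liminf is `⊤`, its `toReal` is `0`, so the first term of the `max` is `2 / 0 = 0`. -/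
theorem euler_spt (r : ℕ → ℕ) (hr : Monotone r) :
    (IsSPT (eulerLam r) ↔
      0 < Filter.liminf (fun k : ℕ => ((r k : ℝ) / Real.log ((k : ℝ) + 1) : EReal))
        Filter.atTop) ∧
    (0 < Filter.liminf (fun k : ℕ => ((r k : ℝ) / Real.log ((k : ℝ) + 1) : EReal))
        Filter.atTop →
      sptExponent (eulerLam r) =
        max (2 / (2 * Real.log 3 *
          (Filter.liminf (fun k : ℕ => ((r k : ℝ) / Real.log ((k : ℝ) + 1) : EReal))
            Filter.atTop).toReal)) (1 / ((r 0 : ℝ) + 1))) := by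
  have hlim : Filter.liminf (fun k : ℕ => ((r k : ℝ) / Real.log ((k : ℝ) + 1) : EReal)) atTop =
      liminfDivLog fun k => (r k : ℝ) := rfl
  rw [hlim, mul_assoc, div_mul_cancel_left₀ two_ne_zero, isSPT_iff_exists_hasSPTBound]
  set M := max (Real.log 3 * (liminfDivLog fun k => (r k : ℝ)).toReal)⁻¹ (1 / ((r 0 : ℝ) + 1))
  have hM : 0 ≤ M := le_max_of_le_right (by positivity)
  refine ⟨⟨fun ⟨p, hp, h⟩ => (h.pos_liminfDivLog_and_max_le hr hp).1, fun hL => ?_⟩, fun hL => ?_⟩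
  · exact ⟨M + 1, by linarith, hasSPTBound_eulerLam_of_max_lt hr hL (lt_add_one M)⟩
  · exact sptExponent_eq_of_forall hM (fun p hp h => (h.pos_liminfDivLog_and_max_le hr hp).2)
      fun p hp => hasSPTBound_eulerLam_of_max_lt hr hL hp
end
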